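/- arXiv:2506.08025 — 2 statements merged into one kernel-verified Lean document; each statement's English description precedes it below -/
import Mathlib

section
/- Let H ∈ (1/2, 1), q, r, q̄, r̄ > 0, b₁ ∈ ℝ, b₂ ≠ 0, b̄₀ ∈ ℝ, b₁ + b̄₁ < 0 and b₂ + b̄₂ ≠ 0. Define J(K, K̄) = Γ(2H+1)·(q + r K²)/(2·(-(b₁ + b₂ K))^{2H}) + b̄₀²·(q̄ + r̄·K̄²)/((b₁ + b̄₁) + (b₂ + b̄₂)·K̄)² on the admissible set {(K, K̄) : b₁ + b₂ K < 0 and (b₁ + b̄₁) + (b₂ + b̄₂)·K̄ < 0}. Then the pair K* = -(b₁ + √(b₁² + 4H(1-H)·b₂²·q/r))/(2·b₂·(1-H)) and K̄* = (b₂ + b̄₂)·q̄/(r̄·(b₁ + b̄₁)) is admissible and is a global minimizer of J, with optimal value J(K*, K̄*) = Γ(2H+1)·(q + r(K*)²)/(2·(-(b₁ + b₂ K*))^{2H}) + b̄₀²·q̄·r̄ / ((b₁ + b̄₁)²·r̄ + (b₂ + b̄₂)²·q̄). -/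
/-!
The cost is a function of `K` plus a function of `K̄`, so the two are minimised separately.

For the mean part, with `c = b₁ + b̄₁` and `d = b₂ + b̄₂`, Lagrange's identity bounds `(c + dK̄)²`
by `(c²/q̄ + d²/r̄)(q̄ + r̄K̄²)`, with equality at `K̄*`.

For the variance part, put `s = -(b₁ + b₂K) > 0`: then `b₂²(q + rK²) = P(s)` for a quadratic `P`
with nonnegative constant and leading coefficients, and `K*` is the admissible root of the
first-order condition `s P'(s) = 2H P(s)`. Rescaling `s*` to `1`, the inequality
`P(1) t^{2H} ≤ P(t)` is weighted AM-GM for `1, t, t²` with the coefficients of `P` as weights when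
the linear coefficient is nonnegative, and otherwise follows from
`P(t) ≥ P(1)((1 - H) + Ht²) ≥ P(1) t^{2H}`.
-/

theorem mul_rpow_le_quadratic {H a β γ t : ℝ} (hH₀ : 0 ≤ H) (hH₁ : H ≤ 1) (ha : 0 ≤ a)
    (hγ : 0 ≤ γ) (hP : 0 < a + β + γ) (hcrit : β + 2 * γ = 2 * H * (a + β + γ)) (ht : 0 ≤ t) :
    (a + β + γ) * t ^ (2 * H) ≤ a + β * t + γ * t ^ 2 := by
  set M := a + β + γ
  rcases le_or_gt 0 β with hβ | hβ
  · have hw : a / M + β / M + γ / M = 1 := by rw [← add_div, ← add_div, div_self hP.ne']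
    have hexp : (1 : ℝ) ^ (a / M) * t ^ (β / M) * (t ^ 2) ^ (γ / M) = t ^ (2 * H) := by
      rw [Real.one_rpow, one_mul, ← Real.rpow_two, ← Real.rpow_mul ht,
        ← Real.rpow_add_of_nonneg ht (by positivity) (by positivity)]
      congr 1
      field_simp
      linarith
    have amgm := Real.geom_mean_le_arith_mean3_weighted (by positivity) (by positivity)
      (by positivity) zero_le_one ht (sq_nonneg t) hw
    rw [hexp] at amgm
    calc M * t ^ (2 * H) ≤ M * (a / M * 1 + β / M * t + γ / M * t ^ 2) := by gcongr
      _ = a + β * t + γ * t ^ 2 := by field_simp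
  · have amgm := Real.geom_mean_le_arith_mean2_weighted (sub_nonneg.2 hH₁) hH₀ zero_le_one
      (sq_nonneg t) (sub_add_cancel 1 H)
    have hsq : t ^ (2 * H) = (t ^ 2) ^ H := by rw [Real.rpow_mul ht, Real.rpow_two]
    rw [Real.one_rpow, one_mul, ← hsq] at amgm
    calc M * t ^ (2 * H) ≤ M * ((1 - H) * 1 + H * t ^ 2) := by gcongr
      _ ≤ a + β * t + γ * t ^ 2 := by
        -- the difference is `-(β/2)(t - 1)²`
        nlinarith [mul_nonneg (neg_nonneg.2 hβ.le) (sq_nonneg (t - 1))]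

theorem quadratic_mul_rpow_le {H a β γ σ s : ℝ} (hH₀ : 0 ≤ H) (hH₁ : H ≤ 1) (ha : 0 ≤ a)
    (hγ : 0 ≤ γ) (hσ : 0 < σ) (hs : 0 ≤ s) (hP : 0 < a + β * σ + γ * σ ^ 2)
    (hcrit : σ * (β + 2 * γ * σ) = 2 * H * (a + β * σ + γ * σ ^ 2)) :
    (a + β * σ + γ * σ ^ 2) * s ^ (2 * H) ≤ (a + β * s + γ * s ^ 2) * σ ^ (2 * H) := by
  have key := mul_rpow_le_quadratic (β := β * σ) (γ := γ * σ ^ 2) hH₀ hH₁ ha (by positivity) hP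
    (by linear_combination hcrit) (div_nonneg hs hσ.le)
  rw [Real.div_rpow hs hσ.le] at key
  calc (a + β * σ + γ * σ ^ 2) * s ^ (2 * H)
      = (a + β * σ + γ * σ ^ 2) * (s ^ (2 * H) / σ ^ (2 * H)) * σ ^ (2 * H) := by field_simp
    _ ≤ (a + β * σ * (s / σ) + γ * σ ^ 2 * (s / σ) ^ 2) * σ ^ (2 * H) := by gcongr
    _ = (a + β * s + γ * s ^ 2) * σ ^ (2 * H) := by field_simp

noncomputable def varianceCost (H q r b₁ b₂ K : ℝ) : ℝ :=
  Real.Gamma (2 * H + 1) * (q + r * K ^ 2) / (2 * (-(b₁ + b₂ * K)) ^ (2 * H))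

theorem varianceCost_le {H q r b₁ b₂ K₀ K : ℝ} (hH₀ : 0 ≤ H) (hH₁ : H ≤ 1) (hq : 0 < q)
    (hr : 0 ≤ r) (hb₂ : b₂ ≠ 0) (hK₀ : b₁ + b₂ * K₀ < 0) (hK : b₁ + b₂ * K < 0)
    (hstat : r * K₀ * (b₁ + b₂ * K₀) = H * b₂ * (q + r * K₀ ^ 2)) :
    varianceCost H q r b₁ b₂ K₀ ≤ varianceCost H q r b₁ b₂ K := by
  have hquad : ∀ K : ℝ, q * b₂ ^ 2 + r * b₁ ^ 2 + 2 * r * b₁ * (-(b₁ + b₂ * K))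
      + r * (-(b₁ + b₂ * K)) ^ 2 = b₂ ^ 2 * (q + r * K ^ 2) := fun K => by ring
  have key := quadratic_mul_rpow_le (a := q * b₂ ^ 2 + r * b₁ ^ 2) (β := 2 * r * b₁) (γ := r)
    (σ := -(b₁ + b₂ * K₀)) (s := -(b₁ + b₂ * K)) hH₀ hH₁ (by positivity) hr (by linarith)
    (by linarith) (by rw [hquad]; positivity) (by rw [hquad]; linear_combination 2 * b₂ * hstat)
  rw [hquad, hquad, mul_assoc, mul_assoc] at key
  have hvar := le_of_mul_le_mul_left key (by positivity)
  have hΓ : 0 < Real.Gamma (2 * H + 1) := Real.Gamma_pos_of_pos (by linarith)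
  have hs₀ : 0 < (-(b₁ + b₂ * K₀)) ^ (2 * H) := Real.rpow_pos_of_pos (by linarith) _
  have hs : 0 < (-(b₁ + b₂ * K)) ^ (2 * H) := Real.rpow_pos_of_pos (by linarith) _
  unfold varianceCost
  rw [div_le_div_iff₀ (by positivity) (by positivity)]
  nlinarith [mul_le_mul_of_nonneg_left hvar (by positivity : 0 ≤ 2 * Real.Gamma (2 * H + 1))]

noncomputable def optimalGain (H q r b₁ b₂ : ℝ) : ℝ :=
  -(b₁ + √(b₁ ^ 2 + 4 * H * (1 - H) * b₂ ^ 2 * q / r)) / (2 * b₂ * (1 - H))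

theorem add_mul_optimalGain {H q r b₁ b₂ : ℝ} (hH₁ : H ≠ 1) (hb₂ : b₂ ≠ 0) :
    b₁ + b₂ * optimalGain H q r b₁ b₂
      = (b₁ * (1 - 2 * H) - √(b₁ ^ 2 + 4 * H * (1 - H) * b₂ ^ 2 * q / r)) / (2 * (1 - H)) := by
  have : 1 - H ≠ 0 := sub_ne_zero.2 (Ne.symm hH₁)
  unfold optimalGain
  field_simp
  ring

theorem add_mul_optimalGain_neg {H q r b₁ b₂ : ℝ} (hH₀ : 0 < H) (hH₁ : H < 1) (hq : 0 < q)
    (hr : 0 < r) (hb₂ : b₂ ≠ 0) : b₁ + b₂ * optimalGain H q r b₁ b₂ < 0 := by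
  rw [add_mul_optimalGain hH₁.ne hb₂]
  refine div_neg_of_neg_of_pos (sub_neg.2 ?_) (by linarith)
  have hS : |b₁| < √(b₁ ^ 2 + 4 * H * (1 - H) * b₂ ^ 2 * q / r) := by
    rw [← Real.sqrt_sq_eq_abs]
    exact Real.sqrt_lt_sqrt (sq_nonneg _) (lt_add_of_pos_right _ (by
      have : 0 < 1 - H := by linarith
      positivity))
  have h2H : |1 - 2 * H| ≤ 1 := abs_le.2 ⟨by linarith, by linarith⟩
  calc b₁ * (1 - 2 * H) ≤ |b₁| * |1 - 2 * H| := by rw [← abs_mul]; exact le_abs_self _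
    _ ≤ |b₁| := mul_le_of_le_one_right (abs_nonneg _) h2H
    _ < _ := by linarith

theorem optimalGain_stationary {H q r b₁ b₂ : ℝ} (hH₀ : 0 ≤ H) (hH₁ : H < 1) (hq : 0 ≤ q)
    (hr : 0 < r) (hb₂ : b₂ ≠ 0) :
    r * optimalGain H q r b₁ b₂ * (b₁ + b₂ * optimalGain H q r b₁ b₂)
      = H * b₂ * (q + r * optimalGain H q r b₁ b₂ ^ 2) := by
  have h1H : 0 < 1 - H := by linarith
  have hS := Real.sq_sqrt (by positivity : 0 ≤ b₁ ^ 2 + 4 * H * (1 - H) * b₂ ^ 2 * q / r)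
  unfold optimalGain
  set S := √(b₁ ^ 2 + 4 * H * (1 - H) * b₂ ^ 2 * q / r)
  field_simp
  field_simp at hS
  linear_combination (1 - H) * hS

noncomputable def meanCost (q' r' b₀' c d K' : ℝ) : ℝ :=
  b₀' ^ 2 * (q' + r' * K' ^ 2) / (c + d * K') ^ 2

noncomputable def optimalMeanGain (q' r' c d : ℝ) : ℝ := d * q' / (r' * c)

theorem add_mul_optimalMeanGain_neg {q' r' c d : ℝ} (hq' : 0 ≤ q') (hr' : 0 < r') (hc : c < 0) :
    c + d * optimalMeanGain q' r' c d < 0 := by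
  have hrc : r' * c < 0 := mul_neg_of_pos_of_neg hr' hc
  have : c + d * optimalMeanGain q' r' c d = (c ^ 2 * r' + d ^ 2 * q') / (r' * c) := by
    unfold optimalMeanGain
    field_simp
  rw [this]
  exact div_neg_of_pos_of_neg (by have := hc.ne; positivity) hrc

theorem meanCost_optimalMeanGain {q' r' b₀' c d : ℝ} (hq' : 0 ≤ q') (hr' : 0 < r') (hc : c ≠ 0) :
    meanCost q' r' b₀' c d (optimalMeanGain q' r' c d)
      = b₀' ^ 2 * q' * r' / (c ^ 2 * r' + d ^ 2 * q') := by
  have hden : 0 < c ^ 2 * r' + d ^ 2 * q' := by positivity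
  unfold meanCost optimalMeanGain
  field_simp

theorem le_meanCost {q' r' b₀' c d K' : ℝ} (hq' : 0 ≤ q') (hr' : 0 < r') (hc : c ≠ 0)
    (hK' : c + d * K' ≠ 0) :
    b₀' ^ 2 * q' * r' / (c ^ 2 * r' + d ^ 2 * q') ≤ meanCost q' r' b₀' c d K' := by
  unfold meanCost
  rw [div_le_div_iff₀ (by positivity) (pow_two_pos_of_ne_zero hK')]
  -- Lagrange's identity: (q' + r'K²)(c²r' + d²q') - q'r'(c + dK)² = (q'd - r'cK)²
  nlinarith [sq_nonneg (b₀' * (q' * d - r' * c * K'))]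

theorem stmt_7_general (H q r q' r' b₁ b₂ b₀' b₁' b₂' : ℝ)
    (hH : 1/2 < H) (hH1 : H < 1) (hq : 0 < q) (hr : 0 < r)
    (hq' : 0 < q') (hr' : 0 < r') (hb₂ : b₂ ≠ 0)
    (hc : b₁ + b₁' < 0) :
    let J : ℝ → ℝ → ℝ := fun K K' =>
      Real.Gamma (2*H + 1) * (q + r * K^2) / (2 * (-(b₁ + b₂ * K)) ^ (2*H)) +
        b₀'^2 * (q' + r' * K'^2) / ((b₁ + b₁') + (b₂ + b₂') * K')^2;
    let Kstar : ℝ := -(b₁ + Real.sqrt (b₁^2 + 4*H*(1-H) * b₂^2 * q / r)) / (2 * b₂ * (1-H));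
    let Kbarstar : ℝ := (b₂ + b₂') * q' / (r' * (b₁ + b₁'));
    (b₁ + b₂ * Kstar < 0 ∧ (b₁ + b₁') + (b₂ + b₂') * Kbarstar < 0) ∧
    (∀ K K' : ℝ, b₁ + b₂ * K < 0 → (b₁ + b₁') + (b₂ + b₂') * K' < 0 →
      J Kstar Kbarstar ≤ J K K') ∧
    J Kstar Kbarstar =
      Real.Gamma (2*H + 1) * (q + r * Kstar^2) / (2 * (-(b₁ + b₂ * Kstar)) ^ (2*H)) +
        b₀'^2 * q' * r' / ((b₁ + b₁')^2 * r' + (b₂ + b₂')^2 * q') := by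
  intro J Kstar Kbarstar
  have hH₀ : 0 < H := by linarith
  have hJ : ∀ K K', J K K' =
      varianceCost H q r b₁ b₂ K + meanCost q' r' b₀' (b₁ + b₁') (b₂ + b₂') K' := fun _ _ => rfl
  have hKstar : b₁ + b₂ * optimalGain H q r b₁ b₂ < 0 :=
    add_mul_optimalGain_neg hH₀ hH1 hq hr hb₂
  have hmean :
      meanCost q' r' b₀' (b₁ + b₁') (b₂ + b₂') (optimalMeanGain q' r' (b₁ + b₁') (b₂ + b₂'))
        = b₀' ^ 2 * q' * r' / ((b₁ + b₁') ^ 2 * r' + (b₂ + b₂') ^ 2 * q') :=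
    meanCost_optimalMeanGain hq'.le hr' hc.ne
  refine ⟨⟨hKstar, add_mul_optimalMeanGain_neg hq'.le hr' hc⟩, fun K K' hK hK' => ?_, ?_⟩
  · rw [hJ, hJ]
    refine add_le_add (varianceCost_le hH₀.le hH1.le hq hr.le hb₂ hKstar hK
      (optimalGain_stationary hH₀.le hH1 hq.le hr hb₂)) ?_
    exact hmean ▸ le_meanCost hq'.le hr' hc.ne hK'.ne
  · rw [hJ]
    exact congrArg _ hmean

/-- Variance-aware mean-field-type ergodic control under Rosenblatt noise: the pair
`(K*, K̄*)` is admissible and globally minimizes the total cost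
`J(K,K̄) = Γ(2H+1)·(q+rK²)/(2(-(b₁+b₂K))^{2H}) + b̄₀²·(q̄+r̄K̄²)/((b₁+b̄₁)+(b₂+b̄₂)K̄)²`
over the admissible set, with the stated optimal value. -/
theorem stmt_7 (H q r q' r' b₁ b₂ b₀' b₁' b₂' : ℝ)
    (hH : 1/2 < H) (hH1 : H < 1) (hq : 0 < q) (hr : 0 < r)
    (hq' : 0 < q') (hr' : 0 < r') (hb₂ : b₂ ≠ 0)
    (hc : b₁ + b₁' < 0) (hd : b₂ + b₂' ≠ 0) :
    let J : ℝ → ℝ → ℝ := fun K K' =>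
      Real.Gamma (2*H + 1) * (q + r * K^2) / (2 * (-(b₁ + b₂ * K)) ^ (2*H)) +
        b₀'^2 * (q' + r' * K'^2) / ((b₁ + b₁') + (b₂ + b₂') * K')^2;
    let Kstar : ℝ := -(b₁ + Real.sqrt (b₁^2 + 4*H*(1-H) * b₂^2 * q / r)) / (2 * b₂ * (1-H));
    let Kbarstar : ℝ := (b₂ + b₂') * q' / (r' * (b₁ + b₁'));
    (b₁ + b₂ * Kstar < 0 ∧ (b₁ + b₁') + (b₂ + b₂') * Kbarstar < 0) ∧
    (∀ K K' : ℝ, b₁ + b₂ * K < 0 → (b₁ + b₁') + (b₂ + b₂') * K' < 0 →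
      J Kstar Kbarstar ≤ J K K') ∧
    J Kstar Kbarstar =
      Real.Gamma (2*H + 1) * (q + r * Kstar^2) / (2 * (-(b₁ + b₂ * Kstar)) ^ (2*H)) +
        b₀'^2 * q' * r' / ((b₁ + b₁')^2 * r' + (b₂ + b₂')^2 * q') :=
  stmt_7_general H q r q' r' b₁ b₂ b₀' b₁' b₂' hH hH1 hq hr hq' hr' hb₂ hc
end

section
/- Let I be a finite index set, H ∈ (1/2, 1), ε > 0, and for each i ∈ I let r_i > 0. Suppose (η_i)_{i∈I} are real numbers such that 1 + Σ_{j∈I} η_j > 0, a_i := 1 + Σ_{j∈I, j≠i} η_j > 0 for each i, and η_i = (-(r_i a_i + 2H - 1) + √((r_i a_i + 2H - 1)² + 4(1-H)·r_i·a_i)) / (2·(1-H)·r_i) for every i ∈ I. Then for every i ∈ I, η_i is a global maximizer of the function z ↦ Γ(2H+1)·(z - (r_i/2)·z²) / (2·((a_i + z)/ε)^{2H}) over {z ∈ ℝ : a_i + z > 0}; that is, (η_i)_{i∈I} is a Nash equilibrium of the fluctuation game in stationary linear price-feedback strategies. -/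
/-!
Write `g(z) = z - (r/2) z²` and `a = 1 + Σ_{j≠i} η_j`, so that the payoff is a positive
multiple of `g(z) / (a + z)^{2H}`. The fixed-point formula says exactly that `η` is the
positive root of `(1-H) r η² + (r a + 2H - 1) η - a = 0`, which is the stationarity
condition `g'(η) (a + η) = 2H g(η)`. Since `g` is concave,
`g(z) ≤ g(η) + g'(η)(z - η) = g(η) (1 + 2H (z - η)/(a + η))`, and for `2H ≥ 1` Bernoulli's
inequality bounds the last factor by `((a + z)/(a + η))^{2H}`; hence `η` is a global maximiser.
-/

open Finset

theorem quadratic_eq_zero_of_eq_quadratic_formula {p b c N : ℝ} (hp : p ≠ 0)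
    (hD : 0 ≤ b ^ 2 + 4 * p * c)
    (hN : N = (-b + √(b ^ 2 + 4 * p * c)) / (2 * p)) :
    p * N ^ 2 + b * N - c = 0 := by
  have hdiscrim : discrim p b (-c) = √(b ^ 2 + 4 * p * c) * √(b ^ 2 + 4 * p * c) := by
    rw [Real.mul_self_sqrt hD, discrim]; ring
  have := (quadratic_eq_zero_iff hp hdiscrim N).2 (Or.inl hN)
  linear_combination this

theorem quadratic_formula_pos {p b c : ℝ} (hp : 0 < p) (hc : 0 < c) :
    0 < (-b + √(b ^ 2 + 4 * p * c)) / (2 * p) := by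
  have : b < √(b ^ 2 + 4 * p * c) := Real.lt_sqrt_of_sq_lt (by nlinarith)
  apply div_pos <;> linarith

noncomputable def bestResponse (H r a : ℝ) : ℝ :=
  (-(r * a + 2*H - 1) + Real.sqrt ((r * a + 2*H - 1)^2 + 4*(1-H) * r * a)) / (2*(1-H) * r)

section bestResponse

variable {H r a : ℝ}

theorem bestResponse_quadratic (hH1 : H < 1) (hr : 0 < r) (ha : 0 ≤ a) :
    (1 - H) * r * bestResponse H r a ^ 2 + (r * a + 2*H - 1) * bestResponse H r a - a = 0 := by
  have hp : 0 < (1 - H) * r := mul_pos (by linarith) hr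
  refine quadratic_eq_zero_of_eq_quadratic_formula hp.ne' (by positivity) ?_
  rw [bestResponse]; ring_nf

theorem bestResponse_pos (hH1 : H < 1) (hr : 0 < r) (ha : 0 < a) : 0 < bestResponse H r a := by
  have hp : 0 < (1 - H) * r := mul_pos (by linarith) hr
  convert quadratic_formula_pos (b := r * a + 2*H - 1) hp ha using 1
  rw [bestResponse]; ring_nf

theorem mul_bestResponse_lt_one (hH0 : 0 < H) (hH1 : H < 1) (hr : 0 < r) (ha : 0 ≤ a) :
    r * bestResponse H r a < 1 := by
  have hsqrt : √((r * a + 2*H - 1)^2 + 4*(1-H) * r * a) < 1 + r * a := by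
    rw [Real.sqrt_lt' (by positivity)]
    nlinarith [mul_pos hH0 (by linarith : (0:ℝ) < 1 - H)]
  have hden : 0 < 2*(1-H) * r := by nlinarith
  rw [bestResponse, mul_div_assoc', div_lt_one hden]
  nlinarith

theorem bestResponse_stationary (hH1 : H < 1) (hr : 0 < r) (ha : 0 ≤ a) :
    (1 - r * bestResponse H r a) * (a + bestResponse H r a) =
      2*H * (bestResponse H r a - r/2 * bestResponse H r a ^ 2) := by
  linear_combination -bestResponse_quadratic hH1 hr ha

end bestResponse

theorem sub_mul_sq_le_mul_rpow_of_stationary {p R a N z : ℝ} (hp : 1 ≤ p) (hR : 0 ≤ R)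
    (hN : 0 < a + N) (hz : 0 ≤ a + z)
    (hstat : (1 - R*N) * (a + N) = p * (N - R/2 * N^2)) (hg : 0 ≤ N - R/2 * N^2) :
    z - R/2 * z^2 ≤ (N - R/2 * N^2) * ((a + z) / (a + N)) ^ p := by
  set s := (z - N) / (a + N) with hs
  have hs1 : -1 ≤ s := by rw [hs, le_div_iff₀ hN]; linarith
  have htangent : z - R/2 * z^2 ≤ (N - R/2 * N^2) * (1 + p * s) := by
    have : (N - R/2 * N^2) * (1 + p * s) = z - R/2 * z^2 + R/2 * (z - N)^2 := by
      rw [hs]; field_simp; linear_combination (-2) * (z - N) * hstat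
    nlinarith [sq_nonneg (z - N)]
  calc z - R/2 * z^2 ≤ (N - R/2 * N^2) * (1 + p * s) := htangent
    _ ≤ (N - R/2 * N^2) * (1 + s) ^ p := by
      gcongr; exact one_add_mul_self_le_rpow_one_add hs1 hp
    _ = (N - R/2 * N^2) * ((a + z) / (a + N)) ^ p := by
      rw [hs]; congr 2; field_simp; ring

theorem div_rpow_le_div_rpow_of_le_mul_rpow {u v x y ε p : ℝ} (hx : 0 < x) (hy : 0 < y)
    (hε : 0 < ε) (h : u ≤ v * (x / y) ^ p) : u / (x / ε) ^ p ≤ v / (y / ε) ^ p := by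
  have hsplit : (x / ε) ^ p = (x / y) ^ p * (y / ε) ^ p := by
    rw [← Real.mul_rpow (by positivity) (by positivity)]; congr 1; field_simp
  rw [div_le_div_iff₀ (by positivity) (by positivity), hsplit]
  calc u * (y / ε) ^ p ≤ v * (x / y) ^ p * (y / ε) ^ p := by gcongr
    _ = v * ((x / y) ^ p * (y / ε) ^ p) := by ring

theorem stmt_11_general {I : Type*} [Fintype I] [DecidableEq I]
    (H ε : ℝ) (r η : I → ℝ)
    (hH : 1/2 < H) (hH1 : H < 1) (hε : 0 < ε) (hr : ∀ i, 0 < r i)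
    (ha : ∀ i, 0 < 1 + ∑ j ∈ univ.erase i, η j)
    (hfix : ∀ i, η i =
      (-(r i * (1 + ∑ j ∈ univ.erase i, η j) + 2*H - 1) +
          Real.sqrt ((r i * (1 + ∑ j ∈ univ.erase i, η j) + 2*H - 1)^2 +
            4*(1-H) * r i * (1 + ∑ j ∈ univ.erase i, η j))) / (2*(1-H) * r i)) :
    ∀ i, ∀ z : ℝ,
      (1 + ∑ j ∈ univ.erase i, η j) + z > 0 →
      Real.Gamma (2*H + 1) * (z - (r i / 2) * z^2) /
          (2 * (((1 + ∑ j ∈ univ.erase i, η j) + z)/ε) ^ (2*H)) ≤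
        Real.Gamma (2*H + 1) * (η i - (r i / 2) * (η i)^2) /
          (2 * (((1 + ∑ j ∈ univ.erase i, η j) + η i)/ε) ^ (2*H)) := by
  intro i z hz
  set a := 1 + ∑ j ∈ univ.erase i, η j
  have hη : η i = bestResponse H (r i) a := hfix i
  have ha' : 0 < a := ha i
  have hpos : 0 < η i := hη ▸ bestResponse_pos hH1 (hr i) ha'
  have hlt : r i * η i < 1 := hη ▸ mul_bestResponse_lt_one (by linarith) hH1 (hr i) ha'.le
  have hstat := hη ▸ bestResponse_stationary hH1 (hr i) ha'.le
  have hg : 0 ≤ η i - r i / 2 * η i ^ 2 := by nlinarith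
  have hbound := sub_mul_sq_le_mul_rpow_of_stationary (by linarith) (hr i).le
    (by linarith) hz.le hstat hg
  rw [mul_div_mul_comm, mul_div_mul_comm]
  exact mul_le_mul_of_nonneg_left
    (div_rpow_le_div_rpow_of_le_mul_rpow hz (by linarith) hε hbound) (by positivity)

/-- Nash equilibrium fixed point of the Rosenblatt-driven Cournot fluctuation game:
if the gains `η i` satisfy the stated fixed-point system with `aᵢ = 1 + Σ_{j≠i} ηⱼ > 0`
and `1 + Σⱼ ηⱼ > 0`, then each `η i` globally maximizes
`z ↦ Γ(2H+1)·(z - (rᵢ/2)z²)/(2·((aᵢ+z)/ε)^{2H})` over `{z : aᵢ + z > 0}`. -/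
theorem stmt_11 {I : Type*} [Fintype I] [DecidableEq I]
    (H ε : ℝ) (r η : I → ℝ)
    (hH : 1/2 < H) (hH1 : H < 1) (hε : 0 < ε) (hr : ∀ i, 0 < r i)
    (hstab : 0 < 1 + ∑ j, η j)
    (ha : ∀ i, 0 < 1 + ∑ j ∈ univ.erase i, η j)
    (hfix : ∀ i, η i =
      (-(r i * (1 + ∑ j ∈ univ.erase i, η j) + 2*H - 1) +
          Real.sqrt ((r i * (1 + ∑ j ∈ univ.erase i, η j) + 2*H - 1)^2 +
            4*(1-H) * r i * (1 + ∑ j ∈ univ.erase i, η j))) / (2*(1-H) * r i)) :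
    ∀ i, ∀ z : ℝ,
      (1 + ∑ j ∈ univ.erase i, η j) + z > 0 →
      Real.Gamma (2*H + 1) * (z - (r i / 2) * z^2) /
          (2 * (((1 + ∑ j ∈ univ.erase i, η j) + z)/ε) ^ (2*H)) ≤
        Real.Gamma (2*H + 1) * (η i - (r i / 2) * (η i)^2) /
          (2 * (((1 + ∑ j ∈ univ.erase i, η j) + η i)/ε) ^ (2*H)) :=
  stmt_11_general H ε r η hH hH1 hε hr ha hfix
end
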